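/- For all integers h ≥ 1 and rational x, the coefficient of z^0 through z^h in the formal power series expansion of P_h(x, -z)/Q_h(x, -z) equals C(x+n, n) for 0 ≤ n ≤ h, where P_h(x,z) = Σ_{n=0}^{h-1} C(x+n-h, n)·C(h-1,n)/C(2h-1,n)·(-z)^n and Q_h(x,z) = Σ_{i=0}^{h} C(x+h,i)·(h!/(h-i)!)·((2h-1-i)!/(2h-1)!)·z^i. -/

import Mathlib

/-- Generalized binomial coefficient `C(x, k) = x(x-1)⋯(x-k+1)/k!` for rational `x`. -/
noncomputable def gchoose (x : ℚ) (k : ℕ) : ℚ :=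
  (∏ i ∈ Finset.range k, (x - i)) / (Nat.factorial k)

/-- The formal power series `P_h(x, -z)`, where
`P_h(x, z) = Σ_{n=0}^{h-1} C(x+n-h, n) C(h-1, n) / C(2h-1, n) (-z)^n`. -/
noncomputable def Pser (x : ℚ) (h : ℕ) : PowerSeries ℚ :=
  PowerSeries.mk fun n =>
    if n < h then gchoose (x + n - h) n * gchoose ((h : ℚ) - 1) n / gchoose (2 * (h : ℚ) - 1) n
    else 0

/-- The formal power series `Q_h(x, -z)`, where
`Q_h(x, z) = Σ_{i=0}^{h} C(x+h, i) (h!/(h-i)!) ((2h-1-i)!/(2h-1)!) z^i`. -/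
noncomputable def Qser (x : ℚ) (h : ℕ) : PowerSeries ℚ :=
  PowerSeries.mk fun i =>
    if i ≤ h then
      (-1 : ℚ) ^ i * gchoose (x + h) i * ((Nat.factorial h : ℚ) / (Nat.factorial (h - i) : ℚ)) *
        ((Nat.factorial (2 * h - 1 - i) : ℚ) / (Nat.factorial (2 * h - 1) : ℚ))
    else 0

/-!
`Σ_m C(x+m, m) z^m` is the expansion of `(1 - z)^(-(x+1))`, so it suffices that `P_h(x,-z)`
and `Q_h(x,-z) (1 - z)^(-(x+1))` agree up to `z^h`. Both coefficient sequences start with `1`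
and satisfy `(n+1)(2h-1-n) a_{n+1} = (x+n+1-h)(h-1-n) a_n` for `n < h`, where the leading
factor does not vanish. For `P` this is read off from the hypergeometric closed form of its
coefficients; for the convolution it is Zeilberger's recurrence, with certificate `i(i-2h)` times
the summand, which follows from the first-order recurrences of the coefficients of the factors.
-/

open Finset PowerSeries

lemma gchoose_zero (y : ℚ) : gchoose y 0 = 1 := by simp [gchoose]

lemma gchoose_succ (y : ℚ) (k : ℕ) : gchoose y (k + 1) = gchoose y k * (y - k) / (k + 1) := by
  rw [gchoose, gchoose, prod_range_succ, Nat.factorial_succ]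
  push_cast
  rw [div_mul_eq_mul_div, div_div, mul_comm ((k : ℚ) + 1)]

lemma gchoose_add_one_succ (y : ℚ) (k : ℕ) :
    gchoose (y + 1) (k + 1) * (k + 1) = (y + 1) * gchoose y k := by
  have hshift : ∀ j ∈ range k, y + 1 - ((j + 1 : ℕ) : ℚ) = y - j := fun j _ => by
    push_cast; ring
  rw [gchoose, gchoose, prod_range_succ', prod_congr rfl hshift, Nat.factorial_succ]
  push_cast
  field_simp
  ring

lemma gchoose_pos (y : ℚ) (k : ℕ) (hy : (k : ℚ) < y + 1) : 0 < gchoose y k := by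
  refine div_pos (prod_pos fun j hj => ?_) (by positivity : (0 : ℚ) < _)
  have : (j : ℚ) + 1 ≤ k := by exact_mod_cast mem_range.mp hj
  linarith

theorem eq_of_first_order_recurrence {M : Type*} [MonoidWithZero M] [IsLeftCancelMulZero M]
    {α β a b : ℕ → M} {N : ℕ} (h₀ : a 0 = b 0) (hα : ∀ n < N, α n ≠ 0)
    (ha : ∀ n < N, α n * a (n + 1) = β n * a n)
    (hb : ∀ n < N, α n * b (n + 1) = β n * b n) :
    ∀ n ≤ N, a n = b n
  | 0, _ => h₀
  | n + 1, hn => by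
    have ih := eq_of_first_order_recurrence h₀ hα ha hb n (by omega)
    exact mul_left_cancel₀ (hα n hn) (by rw [ha n hn, hb n hn, ih])

theorem PowerSeries.coeff_mul_inv_eq_of_coeff_eq {K : Type*} [Field K] {P Q B : K⟦X⟧}
    (hQ : constantCoeff Q ≠ 0) {n : ℕ} (hPQB : ∀ m ≤ n, coeff m P = coeff m (Q * B)) :
    coeff n (P * Q⁻¹) = coeff n B := by
  have hdvd : (X : K⟦X⟧) ^ (n + 1) ∣ P - Q * B :=
    X_pow_dvd_iff.mpr fun m hm => by rw [map_sub, hPQB m (by omega), sub_self]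
  have hdiff : P * Q⁻¹ - B = (P - Q * B) * Q⁻¹ := by
    rw [sub_mul, mul_comm Q B, mul_assoc, PowerSeries.mul_inv_cancel Q hQ, mul_one]
  have := X_pow_dvd_iff.mp (hdiff ▸ dvd_mul_of_dvd_left hdvd Q⁻¹) n (by omega)
  rwa [map_sub, sub_eq_zero] at this

theorem PowerSeries.coeff_mul_recurrence {K : Type*} [Field K] [CharZero K] (x h : K)
    {Q B : K⟦X⟧}
    (hQ : ∀ i : ℕ,
      coeff (i + 1) Q * ((i + 1) * (i + 1 - 2 * h)) = coeff i Q * ((x + h - i) * (h - i)))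
    (hB : ∀ k : ℕ, (k + 1) * coeff (k + 1) B = (x + k + 1) * coeff k B) (n : ℕ) :
    ((n + 1) * (2 * h - 1 - n)) * coeff (n + 1) (Q * B) =
      ((x + n + 1 - h) * (h - 1 - n)) * coeff n (Q * B) := by
  -- Zeilberger's certificate: the defect of the summands telescopes against `G`.
  let G : ℕ → K := fun i => coeff i Q * coeff (n + 1 - i) B * (i * (i - 2 * h))
  have hcert : ∀ i ∈ range (n + 1),
      (n + 1) * (2 * h - 1 - n) * (coeff i Q * coeff (n + 1 - i) B) -
        (x + n + 1 - h) * (h - 1 - n) * (coeff i Q * coeff (n - i) B) = G (i + 1) - G i := by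
    intro i hi
    obtain ⟨k, rfl⟩ : ∃ k, n = i + k := ⟨n - i, by have := mem_range.mp hi; omega⟩
    simp only [G, show i + k + 1 - i = k + 1 by omega, show i + k + 1 - (i + 1) = k by omega,
      show i + k - i = k by omega]
    refine mul_left_cancel₀ (Nat.cast_add_one_ne_zero k) ?_
    push_cast
    linear_combination
      (coeff i Q * ((i + k + 1) * (2 * h - 1 - (i + k)) + i * (i - 2 * h))) * hB k
        - ((k + 1) * coeff k B) * hQ i
  rw [coeff_mul, coeff_mul, Nat.sum_antidiagonal_eq_sum_range_succ_mk,
    Nat.sum_antidiagonal_eq_sum_range_succ_mk, sum_range_succ, mul_add, mul_sum, mul_sum,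
    ← sub_eq_zero, add_sub_right_comm, ← sum_sub_distrib, sum_congr rfl hcert, sum_range_sub]
  simp only [G, Nat.sub_self, Nat.cast_zero, zero_mul, mul_zero, sub_zero]
  push_cast
  ring

-- The expansion of `(1 - z) ^ (-(x + 1))`.
noncomputable def negBinomialSeries (x : ℚ) : ℚ⟦X⟧ :=
  mk fun m => gchoose (x + m) m

lemma coeff_negBinomialSeries_succ (x : ℚ) (k : ℕ) :
    (k + 1) * coeff (k + 1) (negBinomialSeries x) =
      (x + k + 1) * coeff k (negBinomialSeries x) := by
  simp only [negBinomialSeries, coeff_mk]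
  rw [Nat.cast_succ, ← add_assoc]
  linear_combination gchoose_add_one_succ (x + k) k

lemma coeff_Qser (x : ℚ) {h i : ℕ} (hi : i ≤ h) :
    coeff i (Qser x h) =
      (-1) ^ i * gchoose (x + h) i * h.descFactorial i / (2 * h - 1).descFactorial i := by
  rw [Qser, coeff_mk, if_pos hi, ← Nat.factorial_mul_descFactorial hi,
    ← Nat.factorial_mul_descFactorial (show i ≤ 2 * h - 1 by omega)]
  have : ((2 * h - 1).descFactorial i : ℚ) ≠ 0 :=
    Nat.cast_ne_zero.mpr (Nat.descFactorial_pos.mpr (by omega)).ne'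
  push_cast
  field_simp

lemma constantCoeff_Qser (x : ℚ) (h : ℕ) : constantCoeff (Qser x h) = 1 := by
  simp [← coeff_zero_eq_constantCoeff_apply, coeff_Qser x (Nat.zero_le h), gchoose_zero]

lemma coeff_Qser_succ (x : ℚ) (h i : ℕ) :
    coeff (i + 1) (Qser x h) * ((i + 1) * (i + 1 - 2 * h)) =
      coeff i (Qser x h) * ((x + h - i) * (h - i)) := by
  rcases lt_or_ge i h with hi | hi
  · rw [coeff_Qser x hi, coeff_Qser x hi.le, Nat.descFactorial_succ, Nat.descFactorial_succ,
      gchoose_succ]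
    have : ((2 * h - 1).descFactorial i : ℚ) ≠ 0 :=
      Nat.cast_ne_zero.mpr (Nat.descFactorial_pos.mpr (by omega)).ne'
    have : (i : ℚ) + 1 ≤ h := by exact_mod_cast hi
    push_cast [Nat.cast_sub hi.le, Nat.cast_sub (show i ≤ 2 * h - 1 by omega),
      Nat.cast_sub (show 1 ≤ 2 * h by omega)]
    rw [pow_succ, show (i : ℚ) + 1 - 2 * h = -(2 * h - 1 - i) by ring]
    field_simp
    exact mul_div_cancel_right₀ _ (by linarith)
  · have hsucc : coeff (i + 1) (Qser x h) = 0 := by rw [Qser, coeff_mk, if_neg (by omega)]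
    rcases hi.eq_or_lt with rfl | hi
    · simp [hsucc]
    · rw [hsucc, Qser, coeff_mk, if_neg (show ¬i ≤ h by omega), zero_mul, zero_mul]

lemma coeff_zero_Pser (x : ℚ) {h : ℕ} (hh : 0 < h) : coeff 0 (Pser x h) = 1 := by
  simp [Pser, hh, gchoose_zero]

lemma coeff_Pser_succ (x : ℚ) {h n : ℕ} (hn : n < h) :
    ((n + 1) * (2 * h - 1 - n)) * coeff (n + 1) (Pser x h) =
      ((x + n + 1 - h) * (h - 1 - n)) * coeff n (Pser x h) := by
  have hnh : (n : ℚ) + 1 ≤ h := by exact_mod_cast hn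
  rcases (Nat.succ_le_of_lt hn).lt_or_eq with hn' | rfl
  · rw [Pser, coeff_mk, coeff_mk, if_pos hn', if_pos hn, gchoose_succ ((h : ℚ) - 1),
      gchoose_succ (2 * (h : ℚ) - 1), Nat.cast_succ, show x + (n + 1) - h = x + n - h + 1 by ring,
      eq_div_of_mul_eq (by positivity) (gchoose_add_one_succ (x + n - h) n)]
    have : 0 < gchoose (2 * h - 1) n := gchoose_pos _ _ (by linarith)
    have : (2 * h - 1 - n : ℚ) ≠ 0 := by linarith
    field_simp
    ring
  · rw [Pser, coeff_mk, if_neg (lt_irrefl _)]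
    push_cast
    ring

theorem stmt12 (h : ℕ) (hh : 1 ≤ h) (x : ℚ) (n : ℕ) (hn : n ≤ h) :
    PowerSeries.coeff n (Pser x h * (Qser x h)⁻¹) = gchoose (x + n) n := by
  have hPQ : ∀ m ≤ h, coeff m (Pser x h) = coeff m (Qser x h * negBinomialSeries x) :=
    eq_of_first_order_recurrence (α := fun m : ℕ => ((m : ℚ) + 1) * (2 * h - 1 - m))
      (β := fun m : ℕ => (x + m + 1 - h) * (h - 1 - m))
      (by simp [coeff_zero_Pser x hh, constantCoeff_Qser, negBinomialSeries, gchoose_zero])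
      (fun m hm => mul_ne_zero (Nat.cast_add_one_ne_zero m) (by
        have : (m : ℚ) + 1 ≤ h := by exact_mod_cast hm
        linarith))
      (fun m hm => coeff_Pser_succ x hm)
      fun m _ => coeff_mul_recurrence x h (coeff_Qser_succ x h) (coeff_negBinomialSeries_succ x) m
  rw [coeff_mul_inv_eq_of_coeff_eq (by simp [constantCoeff_Qser]) fun m hm => hPQ m (hm.trans hn),
    negBinomialSeries, coeff_mk]
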